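/- Let I be a nonempty finitely generated ideal set of S = M^1_{\geq 0} \times \cdots \times M^d_{\geq 0}, say I = Up({\alpha_1,...,\alpha_n}), and set \varepsilon = min { \alpha_{ij} : \alpha_{ij} > 0 } (which is positive). Then for every nonempty ideal set J with dist(I,J) < \varepsilon and every m-prime ideal set Q with Q \supseteq I, one has Q \supseteq J. Consequently m-dim(S/J) \geq m-dim(S/I), i.e., m-dim is lower semicontinuous at I with respect to the metric dist. -/
import Mathlib


/-- The semigroup `S = M^1_{≥0} × ⋯ × M^d_{≥0}`, realized as a subset of `Fin d → ℝ`. -/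
def Sset {d : ℕ} (M : Fin d → AddSubgroup ℝ) : Set (Fin d → ℝ) :=
  {s | ∀ i, s i ∈ M i ∧ 0 ≤ s i}

/-- The "monomial ideal set" (up-set) generated by `T ⊆ S`. -/
def Up {d : ℕ} (M : Fin d → AddSubgroup ℝ) (T : Set (Fin d → ℝ)) : Set (Fin d → ℝ) :=
  {s | ∃ t ∈ T, ∃ u ∈ Sset M, s = t + u}

/-- An ideal set of `S`: a subset of `S` closed under adding arbitrary elements of `S`. -/
def IsIdealSet {d : ℕ} (M : Fin d → AddSubgroup ℝ) (I : Set (Fin d → ℝ)) : Prop :=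
  I ⊆ Sset M ∧ ∀ s ∈ I, ∀ u ∈ Sset M, s + u ∈ I

/-- The m-prime ideal set `Q_T = {s ∈ S | s i > 0 for some i ∈ T}`. -/
def QT {d : ℕ} (M : Fin d → AddSubgroup ℝ) (T : Finset (Fin d)) : Set (Fin d → ℝ) :=
  {s ∈ Sset M | ∃ i ∈ T, 0 < s i}

/-- An m-prime ideal set: a proper ideal set `P` with `f + g ∈ P → f ∈ P ∨ g ∈ P`. -/
def IsMPrime {d : ℕ} (M : Fin d → AddSubgroup ℝ) (P : Set (Fin d → ℝ)) : Prop :=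
  IsIdealSet M P ∧ P ≠ Sset M ∧
    ∀ f ∈ Sset M, ∀ g ∈ Sset M, f + g ∈ P → f ∈ P ∨ g ∈ P

/-- An m-irreducible ideal set. -/
def MIrred {d : ℕ} (M : Fin d → AddSubgroup ℝ) (I : Set (Fin d → ℝ)) : Prop :=
  IsIdealSet M I ∧ I ≠ Sset M ∧
    ∀ J K : Set (Fin d → ℝ), IsIdealSet M J → IsIdealSet M K → I = J ∩ K → I = J ∨ I = K

/-- Monomial Krull dimension: `sup {d - |T| : Q_T ⊇ I}` (m-primes are exactly the `Q_T`). -/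
noncomputable def mdim {d : ℕ} (M : Fin d → AddSubgroup ℝ) (I : Set (Fin d → ℝ)) : ℕ :=
  sSup {n : ℕ | ∃ T : Finset (Fin d), I ⊆ QT M T ∧ n = d - T.card}

/-- Euclidean distance between exponent vectors. -/
noncomputable def myDist {d : ℕ} (γ δ : Fin d → ℝ) : ℝ :=
  Real.sqrt (∑ i, (γ i - δ i) ^ 2)

/-- `dist(I,J) < ε` in the sense of Definition 4.5 of the paper. -/
def DistLT {d : ℕ} (ε : ℝ) (I J : Set (Fin d → ℝ)) : Prop :=
  (∀ γ ∈ I, ∃ δ ∈ J, myDist γ δ < ε) ∧ (∀ δ ∈ J, ∃ γ ∈ I, myDist γ δ < ε)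

/-- Distance between ideal sets (Definition 4.6). -/
noncomputable def idealDist {d : ℕ} (I J : Set (Fin d → ℝ)) : ℝ :=
  sInf {ε : ℝ | 0 < ε ∧ DistLT ε I J}

/-- Finitely generated ideal set. -/
def IsFG {d : ℕ} (M : Fin d → AddSubgroup ℝ) (I : Set (Fin d → ℝ)) : Prop :=
  ∃ G : Finset (Fin d → ℝ), ↑G ⊆ Sset M ∧ I = Up M ↑G

lemma abs_le_myDist {d : ℕ} (γ δ : Fin d → ℝ) (i : Fin d) :
    |γ i - δ i| ≤ myDist γ δ := by
  rw [myDist, ← Real.sqrt_sq_eq_abs]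
  exact Real.sqrt_le_sqrt
    (Finset.single_le_sum (f := fun j => (γ j - δ j) ^ 2) (fun j _ => sq_nonneg _)
      (Finset.mem_univ i))

lemma zero_mem_Sset {d : ℕ} (M : Fin d → AddSubgroup ℝ) : (0 : Fin d → ℝ) ∈ Sset M :=
  fun i => ⟨(M i).zero_mem, le_refl 0⟩

lemma nsmul_mem_Sset {d : ℕ} {M : Fin d → AddSubgroup ℝ} {g : Fin d → ℝ}
    (hg : g ∈ Sset M) (m : ℕ) : m • g ∈ Sset M := by
  intro i
  have h := hg i
  constructor
  · simpa [Pi.smul_apply, nsmul_eq_mul] using AddSubgroup.nsmul_mem (M i) h.1 m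
  · simp only [Pi.smul_apply, nsmul_eq_mul]
    exact mul_nonneg (Nat.cast_nonneg m) h.2

lemma prime_absorb {d : ℕ} {M : Fin d → AddSubgroup ℝ} {Q : Set (Fin d → ℝ)}
    (hQ : IsMPrime M Q) {f g : Fin d → ℝ} (hf : f ∈ Q) (hg : g ∈ Sset M)
    (h : ∀ i, 0 < f i → 0 < g i) : g ∈ Q := by
  have key : ∀ m : ℕ, (m + 1) • g ∈ Q → g ∈ Q := by
    intro m
    induction m with
    | zero => simpa using id
    | succ k ih =>
      intro hmem
      have heq : (k + 1 + 1) • g = g + (k + 1) • g := by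
        rw [succ_nsmul, add_comm]
      rw [heq] at hmem
      rcases hQ.2.2 g hg ((k + 1) • g) (nsmul_mem_Sset hg _) hmem with h1 | h1
      · exact h1
      · exact ih h1
  have hN : ∀ i, ∃ N : ℕ, f i ≤ N * g i := by
    intro i
    rcases le_or_gt (f i) 0 with h0 | h0
    · exact ⟨0, by simpa using h0⟩
    · have hgi := h i h0
      obtain ⟨N, hle⟩ := exists_nat_ge (f i / g i)
      exact ⟨N, (div_le_iff₀ hgi).1 hle⟩
  choose N hNle using hN
  set m : ℕ := Finset.univ.sup N with hm
  have hbound : ∀ i, f i ≤ (m + 1 : ℕ) * g i := by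
    intro i
    refine (hNle i).trans (mul_le_mul_of_nonneg_right ?_ (hg i).2)
    exact_mod_cast Nat.le_succ_of_le (Finset.le_sup (Finset.mem_univ i))
  have hu : (m + 1) • g - f ∈ Sset M := by
    intro i
    have hfi : f i ∈ M i := (hQ.1.1 hf i).1
    constructor
    · simp only [Pi.sub_apply, Pi.smul_apply, nsmul_eq_mul]
      exact (M i).sub_mem (by simpa [nsmul_eq_mul] using AddSubgroup.nsmul_mem (M i) (hg i).1 (m+1)) hfi
    · simp only [Pi.sub_apply, Pi.smul_apply, nsmul_eq_mul, sub_nonneg]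
      exact hbound i
  have hmg : (m + 1) • g ∈ Q := by
    have heq : (m + 1) • g = f + ((m + 1) • g - f) := by ring
    rw [heq]
    exact hQ.1.2 f hf _ hu
  exact key m hmg

/-- with `ε = min {α_{ij} : α_{ij} > 0} > 0`, every nonempty ideal set `J`
with `dist(I,J) < ε` satisfies: every m-prime ideal set containing `I` contains `J`;
consequently `mdim (S/I) ≤ mdim (S/J)` (Theorem tsemi-cont). -/
theorem stmt16 (d n : ℕ) (hn : 0 < n) (M : Fin d → AddSubgroup ℝ) (hM : ∀ i, M i ≠ ⊥)
    (α : Fin n → Fin d → ℝ) (hα : ∀ i, α i ∈ Sset M)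
    (hne : ∃ i j, 0 < α i j)
    (ε : ℝ) (hε : ε = sInf {x : ℝ | (∃ i j, x = α i j) ∧ 0 < x}) :
    0 < ε ∧
    ∀ J : Set (Fin d → ℝ), IsIdealSet M J → J.Nonempty →
      DistLT ε (Up M (Set.range α)) J →
      (∀ Q : Set (Fin d → ℝ), IsMPrime M Q → Up M (Set.range α) ⊆ Q → J ⊆ Q) ∧
      mdim M (Up M (Set.range α)) ≤ mdim M J := by
  set A : Set ℝ := {x : ℝ | (∃ i j, x = α i j) ∧ 0 < x} with hA
  have hAfin : A.Finite := by
    apply (Set.finite_range fun p : Fin n × Fin d => α p.1 p.2).subset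
    rintro x ⟨⟨i, j, rfl⟩, -⟩
    exact ⟨(i, j), rfl⟩
  have hAne : A.Nonempty := by
    obtain ⟨i, j, hij⟩ := hne
    exact ⟨α i j, ⟨i, j, rfl⟩, hij⟩
  have hεA : ε ∈ A := hε ▸ hAne.csInf_mem hAfin
  have hεpos : 0 < ε := hεA.2
  have hεle : ∀ i j, 0 < α i j → ε ≤ α i j := fun i j hij =>
    hε ▸ csInf_le hAfin.bddBelow ⟨⟨i, j, rfl⟩, hij⟩
  have hαI : ∀ k, α k ∈ Up M (Set.range α) := fun k =>
    ⟨α k, ⟨k, rfl⟩, 0, zero_mem_Sset M, (add_zero _).symm⟩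
  refine ⟨hεpos, fun J hJ hJne hdist => ?_⟩
  -- key: every δ ∈ J is dominated (in support) by some generator α k
  have key : ∀ δ ∈ J, ∃ k, ∀ i, 0 < α k i → 0 < δ i := by
    intro δ hδ
    obtain ⟨γ, hγI, hγd⟩ := hdist.2 δ hδ
    obtain ⟨t, ⟨k, rfl⟩, u, hu, rfl⟩ := hγI
    refine ⟨k, fun i hi => ?_⟩
    have h1 : ε ≤ α k i := hεle k i hi
    have h2 : |(α k + u) i - δ i| ≤ myDist (α k + u) δ := abs_le_myDist _ _ i
    have h3 : (α k + u) i = α k i + u i := rfl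
    have h4 := (hu i).2
    have := (abs_lt.1 (h2.trans_lt hγd)).2
    simp only [h3] at this
    linarith
  constructor
  · intro Q hQ hIQ δ hδ
    obtain ⟨k, hk⟩ := key δ hδ
    exact prime_absorb hQ (hIQ (hαI k)) (hJ.1 hδ) hk
  · have hsub : {m : ℕ | ∃ T : Finset (Fin d), Up M (Set.range α) ⊆ QT M T ∧ m = d - T.card} ⊆
        {m : ℕ | ∃ T : Finset (Fin d), J ⊆ QT M T ∧ m = d - T.card} := by
      rintro m ⟨T, hIT, rfl⟩
      refine ⟨T, fun δ hδ => ?_, rfl⟩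
      obtain ⟨k, hk⟩ := key δ hδ
      obtain ⟨-, i, hiT, hi⟩ := hIT (hαI k)
      exact ⟨hJ.1 hδ, i, hiT, hk i hi⟩
    rcases Set.eq_empty_or_nonempty
        {m : ℕ | ∃ T : Finset (Fin d), Up M (Set.range α) ⊆ QT M T ∧ m = d - T.card} with he | hne'
    · simp [mdim, he]
    · apply csSup_le_csSup ?_ hne' hsub
      exact ⟨d, by rintro x ⟨T, -, rfl⟩; exact Nat.sub_le d _⟩
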